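/- Let a ∈ C¹([0,1]) with a > 0, and f ∈ C¹([0,∞)) satisfy (f_eq) and (f_sgn). For each n ∈ ℕ let u_n be a classical solution of (P_n), and assume that (u_n) is bounded in W^{1,1}(0,1) and that v_n := φ_n(u_n') → v uniformly on [0,1]. Then: (i) |v(x)| ≤ 1 for every x ∈ [0,1]; (ii) v(0) = v(1) = 0, so |v| < 1 at the endpoints; (iii) if x̄ ∈ (0,1) is such that, for some δ > 0 and all sufficiently large n, the functions u_n are all convex on [x̄ − δ, x̄ + δ] ⊂ (0,1), or all concave there, then |v(x̄)| < 1. -/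

import Mathlib

open Set MeasureTheory Filter Topology

noncomputable section

/-- `φ(s) = s / √(1+s²)`. -/
def phi (s : ℝ) : ℝ := s / Real.sqrt (1 + s ^ 2)

/-- `φ'(s) = (1+s²)^(-3/2)`. -/
def phiD (s : ℝ) : ℝ := 1 / (Real.sqrt (1 + s ^ 2)) ^ 3

/-- the inverse of `φ`, a bijection of `(-1,1)` onto `ℝ`. -/
def phiInv (y : ℝ) : ℝ := y / Real.sqrt (1 - y ^ 2)

/-- the approximation `φₙ`: equal to `φ` on `[-n,n]`, affine outside. -/
def phiN (n : ℕ) (s : ℝ) : ℝ :=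
  if (n : ℝ) < s then phi n + phiD n * (s - n)
  else if s < -(n : ℝ) then -phi n + phiD n * (s + n)
  else phi s

/-- `Φ(s) = √(1+s²) - 1`. -/
def PhiBig (s : ℝ) : ℝ := Real.sqrt (1 + s ^ 2) - 1

/-- `Φₙ(s) = ∫₀ˢ φₙ`. -/
def PhiNBig (n : ℕ) (s : ℝ) : ℝ := ∫ t in (0:ℝ)..s, phiN n t

/-- the extension `f̂` of `f` vanishing on the negatives. -/
def fhat (f : ℝ → ℝ) (s : ℝ) : ℝ := if s < 0 then 0 else f s

/-- `F(s) = ∫_{u0}^s f`. -/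
def Fprim (f : ℝ → ℝ) (u0 s : ℝ) : ℝ := ∫ t in u0..s, f t

/-- assumption `(f_eq)`. -/
def Feq (f : ℝ → ℝ) (u0 : ℝ) : Prop := f 0 = 0 ∧ f u0 = 0

/-- assumption `(f_sgn)`. -/
def Fsgn (f : ℝ → ℝ) (u0 : ℝ) : Prop :=
  (∀ s, 0 < s → s < u0 → f s < 0) ∧ (∀ s, u0 < s → 0 < f s)

/-- the constant `C_a`. -/
def Ca (a : ℝ → ℝ) : ℝ :=
  max ((a 1 / a 0) * Real.exp (∫ x in (0:ℝ)..1, max (-deriv a x) 0 / a x))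
      ((a 0 / a 1) * Real.exp (∫ x in (0:ℝ)..1, max (deriv a x) 0 / a x))

/-- assumption `(f_ap)`, with the value `ū` made explicit. -/
def Fap (a f : ℝ → ℝ) (u0 ubar : ℝ) : Prop :=
  u0 < ubar ∧ (∫ s in u0..ubar, f s) = Ca a * ∫ s in u0..(0:ℝ), f s

/-- assumption `(f_ap)'`. -/
def Fap' (a f : ℝ → ℝ) : Prop :=
  (∫ x in (0:ℝ)..1, a x) * sSup ((fun s => max (-f s) 0) '' Ici 0) < 1

/-- classical solution of the approximated Neumann problem `(Pₙ)`. -/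
def IsPnSol (a f : ℝ → ℝ) (n : ℕ) (u : ℝ → ℝ) : Prop :=
  ContDiff ℝ 2 u ∧ (∀ x ∈ Ioo (0:ℝ) 1, 0 < u x) ∧
  deriv u 0 = 0 ∧ deriv u 1 = 0 ∧
  ∀ x ∈ Ioo (0:ℝ) 1, -deriv (fun y => phiN n (deriv u y)) x = a x * f (u x)

/-- classical solution of the prescribed mean curvature Neumann problem `(P)`. -/
def IsPSol (a f : ℝ → ℝ) (u : ℝ → ℝ) : Prop :=
  ContDiff ℝ 2 u ∧ (∀ x ∈ Ioo (0:ℝ) 1, 0 < u x) ∧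
  deriv u 0 = 0 ∧ deriv u 1 = 0 ∧
  ∀ x ∈ Ioo (0:ℝ) 1, -deriv (fun y => phi (deriv u y)) x = a x * f (u x)

/-- solution of the Cauchy problem with initial datum `d`. -/
def IsCauchySol (a f : ℝ → ℝ) (n : ℕ) (d : ℝ) (u : ℝ → ℝ) : Prop :=
  ContDiff ℝ 2 u ∧ u 0 = d ∧ deriv u 0 = 0 ∧
  ∀ x ∈ Ioo (0:ℝ) 1, -deriv (fun y => phiN n (deriv u y)) x = a x * fhat f (u x)

/-- `θ` is a (clockwise) angular variable for `(u - u0, φₙ(u'))` around `(u0,0)`. -/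
def IsAngle (n : ℕ) (u0 : ℝ) (u θ : ℝ → ℝ) : Prop :=
  ContinuousOn θ (Icc 0 1) ∧
  ∀ x ∈ Icc (0:ℝ) 1,
    u x - u0 = Real.sqrt ((u x - u0) ^ 2 + phiN n (deriv u x) ^ 2) * Real.cos (θ x) ∧
    phiN n (deriv u x) = -(Real.sqrt ((u x - u0) ^ 2 + phiN n (deriv u x) ^ 2) * Real.sin (θ x))

/-- non-constant on `(0,1)`. -/
def Nonconstant (u : ℝ → ℝ) : Prop := ∃ x ∈ Ioo (0:ℝ) 1, ∃ y ∈ Ioo (0:ℝ) 1, u x ≠ u y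

/-- the set of points of `(0,1)` where `u` takes the value `u0`. -/
def zeroSet (u : ℝ → ℝ) (u0 : ℝ) : Set ℝ := {x | x ∈ Ioo (0:ℝ) 1 ∧ u x = u0}

/-- the hypothesis `f'(u0) > λ_{k+1}`: there is `λ̄ < f'(u0)` admitting a nontrivial Neumann
eigenfunction of `-w'' = λ̄ a w` with exactly `k` zeros in `(0,1)`. -/
def EigenHyp (a f : ℝ → ℝ) (u0 : ℝ) (k : ℕ) : Prop :=
  ∃ lam : ℝ, ∃ w : ℝ → ℝ, lam < deriv f u0 ∧ ContDiff ℝ 2 w ∧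
    (∃ x ∈ Icc (0:ℝ) 1, w x ≠ 0) ∧
    (∀ x ∈ Ioo (0:ℝ) 1, -deriv (deriv w) x = lam * a x * w x) ∧
    deriv w 0 = 0 ∧ deriv w 1 = 0 ∧ (zeroSet w 0).ncard = k

/-- the functional `J(v) = ∫₀¹ √(1+|Dv|²)`. -/
def Jfun (v : ℝ → ℝ) : ℝ :=
  sSup { r : ℝ | ∃ w₁ w₂ : ℝ → ℝ, ContDiff ℝ 1 w₁ ∧ ContDiff ℝ 1 w₂ ∧
    tsupport w₁ ⊆ Ioo 0 1 ∧ tsupport w₂ ⊆ Ioo 0 1 ∧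
    (∀ x, w₁ x ^ 2 + w₂ x ^ 2 ≤ 1) ∧
    r = ∫ x in Ioo (0:ℝ) 1, (v x * deriv w₁ x + w₂ x) }

/-- BV-solution of the Neumann problem `(P)`. -/
def IsBVSol (a f : ℝ → ℝ) (u : ℝ → ℝ) : Prop :=
  BoundedVariationOn u (Ioo 0 1) ∧ (∀ x ∈ Ioo (0:ℝ) 1, 0 ≤ u x) ∧
  ∀ v : ℝ → ℝ, BoundedVariationOn v (Ioo 0 1) →
    Jfun u + ∫ x in Ioo (0:ℝ) 1, a x * f (u x) * (v x - u x) ≤ Jfun v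

/-- `u - u0` changes sign at `z`. -/
def ChangesSign (u : ℝ → ℝ) (u0 z : ℝ) : Prop :=
  ∃ δ > (0:ℝ), ((∀ x ∈ Ioo (z - δ) z, u x < u0) ∧ (∀ x ∈ Ioo z (z + δ), u0 < u x)) ∨
           ((∀ x ∈ Ioo (z - δ) z, u0 < u x) ∧ (∀ x ∈ Ioo z (z + δ), u x < u0))

/-- the energy `Eₙ` along a solution of `(Pₙ)`. -/
def EnergyN (a f : ℝ → ℝ) (u0 : ℝ) (n : ℕ) (u : ℝ → ℝ) (x : ℝ) : ℝ :=
  deriv u x * phiN n (deriv u x) - PhiNBig n (deriv u x) + a x * Fprim f u0 (u x)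

/-- the energy `ℰ` of `u` extends to a continuous function on `[0,1]`. -/
def HasContinuousEnergy (a f : ℝ → ℝ) (u0 : ℝ) (u : ℝ → ℝ) : Prop :=
  ∃ E : ℝ → ℝ, ContinuousOn E (Icc 0 1) ∧
    ∀ x ∈ Ioo (0:ℝ) 1, ContinuousAt u x →
      (DifferentiableAt ℝ u x →
        E x = 1 - 1 / Real.sqrt (1 + deriv u x ^ 2) + a x * Fprim f u0 (u x)) ∧
      (¬ DifferentiableAt ℝ u x → E x = 1 + a x * Fprim f u0 (u x))

/-- the oscillatory structure of the BV-solutions of Theorem 1.1: `m` generalized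
intersections with `u0`, with starting sign `σ` (`σ = 1` for case (I), `σ = -1` for case (II)). -/
def OscStructure (u0 : ℝ) (u : ℝ → ℝ) (m : ℕ) (σ : ℝ) : Prop :=
  ∃ x : ℕ → ℝ,
    x 0 = 0 ∧ x (m + 1) = 1 ∧ (∀ i ≤ m, x i < x (i + 1)) ∧
    ContDiffOn ℝ 2 u (Ico 0 (x 1)) ∧ ContDiffOn ℝ 2 u (Ioc (x m) 1) ∧
    (∀ i, 1 ≤ i → i + 1 ≤ m → ContDiffOn ℝ 2 u (Ioo (x i) (x (i + 1)))) ∧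
    derivWithin u (Icc 0 1) 0 = 0 ∧ derivWithin u (Icc 0 1) 1 = 0 ∧
    (∀ i ≤ m, ∀ y ∈ Ioo (x i) (x (i + 1)), 0 < σ * (-1 : ℝ) ^ (i + 1) * (u y - u0)) ∧
    ∀ i, 1 ≤ i → i ≤ m →
      (u (x i) = u0 ∧ ContDiffOn ℝ 2 u (Ioo (x (i - 1)) (x (i + 1)))) ∨
      (∃ L R : ℝ, Tendsto u (𝓝[<] x i) (𝓝 L) ∧ Tendsto u (𝓝[>] x i) (𝓝 R) ∧
        (0 < σ * (-1 : ℝ) ^ (i + 1) →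
          L ≤ u0 ∧ u0 ≤ R ∧ Tendsto (deriv u) (𝓝[<] x i) atTop ∧
            Tendsto (deriv u) (𝓝[>] x i) atTop) ∧
        (σ * (-1 : ℝ) ^ (i + 1) < 0 →
          R ≤ u0 ∧ u0 ≤ L ∧ Tendsto (deriv u) (𝓝[<] x i) atBot ∧
            Tendsto (deriv u) (𝓝[>] x i) atBot))

/-! `|φₙ(s)| > φ(K)` with `K ≤ n` forces `|s| > K`; in particular `|φₙ(s)| ≥ 1` forces
`|s| ≥ n`. Hence `|v| > 1` near a point, or `|v(x̄)| = 1`, makes `|uₙ'|` arbitrarily large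
on an interval of fixed length, against the `L¹` bound on `uₙ'`. At `x̄` this uses that
`uₙ'` is monotone near `x̄`, so `|uₙ'| ≥ |uₙ'(x̄)|` on `[x̄, x̄ + δ]` or on `[x̄ - δ, x̄]`,
according to the sign of `uₙ'(x̄)`. The endpoint values come from `uₙ'(0) = uₙ'(1) = 0`. -/

theorem sqrt_one_add_sq_pos (s : ℝ) : 0 < Real.sqrt (1 + s ^ 2) := by positivity

theorem continuous_phi : Continuous phi :=
  continuous_id.div (by fun_prop) fun s => (sqrt_one_add_sq_pos s).ne'

theorem phi_zero : phi 0 = 0 := by simp [phi]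

theorem phi_neg (s : ℝ) : phi (-s) = -phi s := by simp [phi, neg_div]

theorem abs_phi (s : ℝ) : |phi s| = phi |s| := by
  rw [phi, phi, abs_div, sq_abs, abs_of_pos (sqrt_one_add_sq_pos s)]

theorem abs_phi_lt_one (s : ℝ) : |phi s| < 1 := by
  rw [phi, abs_div, abs_of_pos (sqrt_one_add_sq_pos s), div_lt_one (sqrt_one_add_sq_pos s),
    ← Real.sqrt_sq_eq_abs]
  exact Real.sqrt_lt_sqrt (sq_nonneg s) (lt_one_add _)

theorem monotoneOn_phi : MonotoneOn phi (Ici 0) := by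
  intro s (hs : 0 ≤ s) t (ht : 0 ≤ t) hst
  rw [phi, phi, div_le_div_iff₀ (sqrt_one_add_sq_pos s) (sqrt_one_add_sq_pos t)]
  calc s * Real.sqrt (1 + t ^ 2) = Real.sqrt (s ^ 2 * (1 + t ^ 2)) := by
        rw [Real.sqrt_mul' _ (by positivity), Real.sqrt_sq hs]
    _ ≤ Real.sqrt (t ^ 2 * (1 + s ^ 2)) :=
        Real.sqrt_le_sqrt (by nlinarith [mul_self_le_mul_self hs hst])
    _ = t * Real.sqrt (1 + s ^ 2) := by
        rw [Real.sqrt_mul' _ (by positivity), Real.sqrt_sq ht]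

theorem phiN_of_abs_le {n : ℕ} {s : ℝ} (h : |s| ≤ n) : phiN n s = phi s := by
  rw [abs_le] at h
  rw [phiN, if_neg h.2.not_gt, if_neg h.1.not_gt]

theorem phiN_eq_phi_clamp (n : ℕ) (s : ℝ) :
    phiN n s = phi (max (-(n : ℝ)) (min s n)) + phiD n * (s - max (-(n : ℝ)) (min s n)) := by
  have hn : (0 : ℝ) ≤ n := n.cast_nonneg
  unfold phiN
  split_ifs with h₁ h₂
  · rw [min_eq_right h₁.le, max_eq_right (by linarith)]
  · rw [min_eq_left (by linarith), max_eq_left h₂.le, phi_neg]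
    ring
  · rw [min_eq_left (not_lt.1 h₁), max_eq_right (not_lt.1 h₂)]
    ring

theorem continuous_phiN (n : ℕ) : Continuous (phiN n) := by
  rw [funext (phiN_eq_phi_clamp n)]
  exact (continuous_phi.comp (by fun_prop)).add (by fun_prop)

theorem phiN_zero (n : ℕ) : phiN n 0 = 0 := by
  rw [phiN_of_abs_le (by simp), phi_zero]

theorem lt_abs_of_phi_lt_abs_phiN {n : ℕ} {K s : ℝ} (hK : K ≤ n) (h : phi K < |phiN n s|) :
    K < |s| := by
  by_contra! hs
  rw [phiN_of_abs_le (hs.trans hK), abs_phi] at h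
  exact h.not_ge (monotoneOn_phi (abs_nonneg s) ((abs_nonneg s).trans hs) hs)

theorem tendsto_abs_atTop_of_tendsto_phiN {s : ℕ → ℝ} {y : ℝ}
    (hs : Tendsto (fun n => phiN n (s n)) atTop (𝓝 y)) (hy : 1 ≤ |y|) :
    Tendsto (fun n => |s n|) atTop atTop := by
  refine tendsto_atTop.2 fun b => ?_
  have hK : phi (max b 0) < |y| := (le_abs_self _).trans_lt (abs_phi_lt_one _) |>.trans_le hy
  filter_upwards [(continuous_abs.tendsto y).comp hs |>.eventually (eventually_gt_nhds hK),
    tendsto_natCast_atTop_atTop.eventually_ge_atTop (max b 0)] with n hn hKn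
  exact (le_max_left b 0).trans (lt_abs_of_phi_lt_abs_phiN hKn hn).le

theorem mul_le_integral_abs {g : ℝ → ℝ} {a b c d K : ℝ} (hac : a ≤ c) (hcd : c ≤ d) (hdb : d ≤ b)
    (hg : IntervalIntegrable g volume a b) (hK : ∀ x ∈ Ioo c d, K ≤ |g x|) :
    K * (d - c) ≤ ∫ x in a..b, |g x| := by
  have hgcd : IntervalIntegrable (fun x => |g x|) volume c d :=
    hg.abs.mono_set (uIcc_subset_uIcc (mem_uIcc_of_le hac (hcd.trans hdb))
      (mem_uIcc_of_le (hac.trans hcd) hdb))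
  calc K * (d - c) = ∫ _ in c..d, K := by simp [mul_comm]
    _ ≤ ∫ x in c..d, |g x| :=
      intervalIntegral.integral_mono_on_of_le_Ioo hcd intervalIntegrable_const hgcd hK
    _ ≤ ∫ x in a..b, |g x| :=
      intervalIntegral.integral_mono_interval hac hcd hdb
        (Eventually.of_forall fun x => abs_nonneg _) hg.abs

theorem MonotoneOn.exists_Icc_abs_le {g : ℝ → ℝ} {x δ : ℝ}
    (hg : MonotoneOn g (Icc (x - δ) (x + δ))) (hδ : 0 ≤ δ) :
    ∃ c, Icc c (c + δ) ⊆ Icc (x - δ) (x + δ) ∧ ∀ y ∈ Icc c (c + δ), |g x| ≤ |g y| := by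
  have hx : x ∈ Icc (x - δ) (x + δ) := ⟨by linarith, by linarith⟩
  rcases le_total 0 (g x) with h | h
  · refine ⟨x, Icc_subset_Icc (by linarith) le_rfl, fun y hy => ?_⟩
    have := hg hx ⟨by linarith [hy.1], hy.2⟩ hy.1
    rw [abs_of_nonneg h]
    exact this.trans (le_abs_self _)
  · refine ⟨x - δ, Icc_subset_Icc le_rfl (by linarith), fun y hy => ?_⟩
    have := hg ⟨hy.1, by linarith [hy.2]⟩ hx (by linarith [hy.2])
    rw [abs_of_nonpos h]
    exact (neg_le_neg this).trans (neg_le_abs _)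

theorem AntitoneOn.exists_Icc_abs_le {g : ℝ → ℝ} {x δ : ℝ}
    (hg : AntitoneOn g (Icc (x - δ) (x + δ))) (hδ : 0 ≤ δ) :
    ∃ c, Icc c (c + δ) ⊆ Icc (x - δ) (x + δ) ∧ ∀ y ∈ Icc c (c + δ), |g x| ≤ |g y| := by
  simpa only [Pi.neg_apply, abs_neg] using hg.neg.exists_Icc_abs_le hδ

theorem abs_le_one_of_tendstoUniformlyOn_phiN {g : ℕ → ℝ → ℝ} {v : ℝ → ℝ} {a b M x : ℝ}
    (hg : ∀ n, Continuous (g n)) (hM : ∀ n, ∫ x in a..b, |g n x| ≤ M)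
    (hv : TendstoUniformlyOn (fun n x => phiN n (g n x)) v atTop (Icc a b)) (hx : x ∈ Ioo a b) :
    |v x| ≤ 1 := by
  by_contra! hvx
  obtain ⟨L, hL1, hLv⟩ := exists_between hvx
  have hv_cont : ContinuousAt v x :=
    (hv.continuousOn (Frequently.of_forall fun n => ((continuous_phiN n).comp (hg n)).continuousOn)
      x (Ioo_subset_Icc_self hx)).continuousAt (Icc_mem_nhds hx.1 hx.2)
  obtain ⟨l, u, hxlu, hlu⟩ := mem_nhds_iff_exists_Ioo_subset.1
    ((((continuous_abs.tendsto _).comp hv_cont).eventually (eventually_gt_nhds hLv)).and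
      (Ioo_mem_nhds hx.1 hx.2))
  have hlu_lt : l < u := hxlu.1.trans hxlu.2
  obtain ⟨hal, hub⟩ := (Ioo_subset_Ioo_iff hlu_lt).1 fun y hy => (hlu hy).2
  have hlarge : ∀ᶠ n : ℕ in atTop, ∀ y ∈ Ioo l u, (n : ℝ) ≤ |g n y| := by
    filter_upwards [Metric.tendstoUniformlyOn_iff.1 hv (L - 1) (by linarith)] with n hn y hy
    have hvy : L < |v y| := (hlu hy).1
    have hclose := hn y (Ioo_subset_Icc_self (hlu hy).2)
    rw [Real.dist_eq] at hclose
    refine (lt_abs_of_phi_lt_abs_phiN le_rfl ?_).le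
    linarith [abs_phi_lt_one n, abs_sub_abs_le_abs_sub (v y) (phiN n (g n y)),
      le_abs_self (phi n)]
  obtain ⟨n, hn, hnM⟩ :=
    (hlarge.and (tendsto_natCast_atTop_atTop.eventually_gt_atTop (M / (u - l)))).exists
  rw [div_lt_iff₀ (sub_pos.2 hlu_lt)] at hnM
  linarith [mul_le_integral_abs hal hlu_lt.le hub ((hg n).intervalIntegrable a b) hn, hM n]

theorem eq_zero_of_tendsto_phiN {s : ℕ → ℝ} {y : ℝ}
    (hs : Tendsto (fun n => phiN n (s n)) atTop (𝓝 y)) (h0 : ∀ n, s n = 0) : y = 0 :=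
  tendsto_nhds_unique hs (by simp [h0, phiN_zero])

theorem abs_lt_one_of_tendsto_phiN {g : ℕ → ℝ → ℝ} {a b M x δ y : ℝ}
    (hg : ∀ n, IntervalIntegrable (g n) volume a b) (hM : ∀ n, ∫ x in a..b, |g n x| ≤ M)
    (hδ : 0 < δ) (hsub : Icc (x - δ) (x + δ) ⊆ Icc a b)
    (hmono : (∀ᶠ n in atTop, MonotoneOn (g n) (Icc (x - δ) (x + δ))) ∨
      (∀ᶠ n in atTop, AntitoneOn (g n) (Icc (x - δ) (x + δ))))
    (hy : Tendsto (fun n => phiN n (g n x)) atTop (𝓝 y)) : |y| < 1 := by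
  by_contra! hy1
  have hhalf : ∀ᶠ n in atTop, ∃ c, Icc c (c + δ) ⊆ Icc (x - δ) (x + δ) ∧
      ∀ z ∈ Icc c (c + δ), |g n x| ≤ |g n z| := by
    rcases hmono with h | h
    · exact h.mono fun n hn => hn.exists_Icc_abs_le hδ.le
    · exact h.mono fun n hn => hn.exists_Icc_abs_le hδ.le
  obtain ⟨n, ⟨c, hc, hcn⟩, hnM⟩ := (hhalf.and
    ((tendsto_abs_atTop_of_tendsto_phiN hy hy1).eventually_gt_atTop (M / δ))).exists
  obtain ⟨hac, hdb⟩ := (Icc_subset_Icc_iff (by linarith)).1 (hc.trans hsub)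
  have hint := mul_le_integral_abs hac (by linarith) hdb (hg n)
    fun z hz => hcn z (Ioo_subset_Icc_self hz)
  rw [add_sub_cancel_left] at hint
  rw [div_lt_iff₀ hδ] at hnM
  linarith [hM n]

theorem statement17_general (a f : ℝ → ℝ)
    (us : ℕ → ℝ → ℝ) (hsol : ∀ n, IsPnSol a f n (us n))
    (hbd : ∃ M : ℝ, ∀ n,
      (∫ x in (0:ℝ)..1, |us n x|) + (∫ x in (0:ℝ)..1, |deriv (us n) x|) ≤ M)
    (v : ℝ → ℝ)
    (hvconv : TendstoUniformlyOn (fun n x => phiN n (deriv (us n) x)) v atTop (Icc 0 1)) :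
    (∀ x ∈ Icc (0:ℝ) 1, |v x| ≤ 1) ∧ v 0 = 0 ∧ v 1 = 0 ∧
    ∀ xb ∈ Ioo (0:ℝ) 1,
      (∃ δ > (0:ℝ), Icc (xb - δ) (xb + δ) ⊆ Ioo (0:ℝ) 1 ∧
        ((∀ᶠ n in atTop, ConvexOn ℝ (Icc (xb - δ) (xb + δ)) (us n)) ∨
         (∀ᶠ n in atTop, ConcaveOn ℝ (Icc (xb - δ) (xb + δ)) (us n)))) →
      |v xb| < 1 := by
  obtain ⟨M, hM⟩ := hbd
  have hderiv_cont (n : ℕ) : Continuous (deriv (us n)) :=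
    (hsol n).1.continuous_deriv one_le_two
  have hderiv_L1 (n : ℕ) : ∫ x in (0:ℝ)..1, |deriv (us n) x| ≤ M := by
    have : 0 ≤ ∫ x in (0:ℝ)..1, |us n x| :=
      intervalIntegral.integral_nonneg zero_le_one fun x _ => abs_nonneg _
    linarith [hM n]
  have hv0 : v 0 = 0 := eq_zero_of_tendsto_phiN
    (hvconv.tendsto_at (left_mem_Icc.2 zero_le_one)) fun n => (hsol n).2.2.1
  have hv1 : v 1 = 0 := eq_zero_of_tendsto_phiN
    (hvconv.tendsto_at (right_mem_Icc.2 zero_le_one)) fun n => (hsol n).2.2.2.1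
  refine ⟨fun x hx => ?_, hv0, hv1, fun xb hxb ⟨δ, hδ, hsub, hcase⟩ => ?_⟩
  · rcases eq_endpoints_or_mem_Ioo_of_mem_Icc hx with rfl | rfl | hx
    · simp [hv0]
    · simp [hv1]
    · exact abs_le_one_of_tendstoUniformlyOn_phiN hderiv_cont hderiv_L1 hvconv hx
  · have hdiff (n : ℕ) (y : ℝ) (_ : y ∈ Icc (xb - δ) (xb + δ)) : DifferentiableAt ℝ (us n) y :=
      ((hsol n).1.differentiable two_ne_zero).differentiableAt
    refine abs_lt_one_of_tendsto_phiN (fun n => (hderiv_cont n).intervalIntegrable 0 1)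
      hderiv_L1 hδ (hsub.trans Ioo_subset_Icc_self) ?_ (hvconv.tendsto_at (Ioo_subset_Icc_self hxb))
    exact hcase.imp (fun h => h.mono fun n hn => hn.monotoneOn_deriv (hdiff n))
      (fun h => h.mono fun n hn => hn.antitoneOn_deriv (hdiff n))

theorem statement17 (a f : ℝ → ℝ) (u0 : ℝ)
    (ha : ContDiff ℝ 1 a) (hapos : ∀ x ∈ Icc (0:ℝ) 1, 0 < a x)
    (hf : ContDiffOn ℝ 1 f (Ici 0)) (hu0 : 0 < u0)
    (hfeq : Feq f u0) (hfsgn : Fsgn f u0)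
    (us : ℕ → ℝ → ℝ) (hsol : ∀ n, IsPnSol a f n (us n))
    (hbd : ∃ M : ℝ, ∀ n,
      (∫ x in (0:ℝ)..1, |us n x|) + (∫ x in (0:ℝ)..1, |deriv (us n) x|) ≤ M)
    (v : ℝ → ℝ)
    (hvconv : TendstoUniformlyOn (fun n x => phiN n (deriv (us n) x)) v atTop (Icc 0 1)) :
    (∀ x ∈ Icc (0:ℝ) 1, |v x| ≤ 1) ∧ v 0 = 0 ∧ v 1 = 0 ∧
    ∀ xb ∈ Ioo (0:ℝ) 1,
      (∃ δ > (0:ℝ), Icc (xb - δ) (xb + δ) ⊆ Ioo (0:ℝ) 1 ∧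
        ((∀ᶠ n in atTop, ConvexOn ℝ (Icc (xb - δ) (xb + δ)) (us n)) ∨
         (∀ᶠ n in atTop, ConcaveOn ℝ (Icc (xb - δ) (xb + δ)) (us n)))) →
      |v xb| < 1 :=
  statement17_general a f us hsol hbd v hvconv
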